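/- arXiv:2012.07940 — 3 statements merged into one kernel-verified Lean document; each statement's English description precedes it below -/
import Mathlib

section
/- Let S be a set, let G be the free group on S, and let G act on a set X. Let (X_i)_{i∈ℕ} be an increasing sequence of finite subsets of X with ⋃_i X_i = X. Then there exists a sequence of group homomorphisms β_i : G → Sym(X_i) (the symmetric group of the finite set X_i) such that for every g ∈ G and every x ∈ X there exists N ∈ ℕ so that for all i ≥ N one has x ∈ X_i, g·x ∈ X_i, and β_i(g)(x) = g·x. -/
open Classical in
/-- Any function injective on a set of a finite type extends to a permutation. -/
lemma exists_perm_extend {β : Type*} [Fintype β] (A : Set β) (f : β → β)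
    (hf : Set.InjOn f A) : ∃ σ : Equiv.Perm β, ∀ x ∈ A, σ x = f x := by
  classical
  set B : Set β := f '' A with hB
  let e1 : A ≃ ↥B := Equiv.Set.imageOfInjOn f A hf
  have hcard : Fintype.card A = Fintype.card B := Fintype.card_congr e1
  have hcardc : Fintype.card (↥Aᶜ) = Fintype.card (↥Bᶜ) := by
    rw [Fintype.card_compl_set, Fintype.card_compl_set, hcard]
  let e2 : (↥Aᶜ) ≃ (↥Bᶜ) := Fintype.equivOfCardEq hcardc
  refine ⟨(Equiv.Set.sumCompl A).symm.trans ((e1.sumCongr e2).trans (Equiv.Set.sumCompl B)), ?_⟩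
  intro x hx
  simp [Equiv.Set.sumCompl_symm_apply_of_mem hx, e1, Equiv.Set.imageOfInjOn]

/-- Combinatorial core of Proposition 5.6: for an action of a free group `G = F(S)`
on a set `X` exhausted by an increasing sequence of finite subsets `X i`, there are
group homomorphisms `β i : G →* Sym(X i)` eventually agreeing with the action at
every point. -/
theorem stmt_2 (S X : Type*) [MulAction (FreeGroup S) X]
    (Xi : ℕ → Finset X) (hmono : Monotone Xi) (hunion : ∀ x : X, ∃ i, x ∈ Xi i) :
    ∃ β : ∀ i, FreeGroup S →* Equiv.Perm (Xi i),
      ∀ (g : FreeGroup S) (x : X), ∃ N : ℕ, ∀ i ≥ N,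
        ∃ (hx : x ∈ Xi i) (_ : g • x ∈ Xi i),
          ((β i g ⟨x, hx⟩ : Xi i) : X) = g • x := by
  classical
  -- For each `i` and generator `s`, a permutation of `Xi i` extending the partial action of `s`.
  have key : ∀ (i : ℕ) (s : S), ∃ σ : Equiv.Perm (Xi i),
      ∀ (x : Xi i) (h : FreeGroup.of s • (x : X) ∈ Xi i), ((σ x : Xi i) : X) = FreeGroup.of s • (x : X) := by
    intro i s
    set A : Set (Xi i) := {x | FreeGroup.of s • (x : X) ∈ Xi i} with hA
    set f : (Xi i) → (Xi i) := fun x =>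
      if h : FreeGroup.of s • (x : X) ∈ Xi i then ⟨_, h⟩ else x with hfdef
    have hinj : Set.InjOn f A := by
      intro x hx y hy hxy
      have hx' : FreeGroup.of s • (x : X) ∈ Xi i := hx
      have hy' : FreeGroup.of s • (y : X) ∈ Xi i := hy
      simp only [hfdef, dif_pos hx', dif_pos hy'] at hxy
      have : FreeGroup.of s • (x : X) = FreeGroup.of s • (y : X) := congrArg Subtype.val hxy
      exact Subtype.ext (smul_left_cancel _ this)
    obtain ⟨σ, hσ⟩ := exists_perm_extend A f hinj
    refine ⟨σ, fun x h => ?_⟩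
    have := hσ x h
    rw [this, hfdef]
    simp [dif_pos h]
  choose σ hσ using key
  refine ⟨fun i => FreeGroup.lift (σ i), ?_⟩
  intro g
  induction g using FreeGroup.induction_on with
  | C1 =>
    intro x
    obtain ⟨N, hN⟩ := hunion x
    refine ⟨N, fun i hi => ?_⟩
    have hx : x ∈ Xi i := hmono hi hN
    refine ⟨hx, by simpa using hx, ?_⟩
    simp
  | of s =>
    intro x
    obtain ⟨N1, hN1⟩ := hunion x
    obtain ⟨N2, hN2⟩ := hunion (FreeGroup.of s • x)
    refine ⟨max N1 N2, fun i hi => ?_⟩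
    have hx : x ∈ Xi i := hmono (le_trans (le_max_left _ _) hi) hN1
    have hgx : FreeGroup.of s • x ∈ Xi i := hmono (le_trans (le_max_right _ _) hi) hN2
    refine ⟨hx, hgx, ?_⟩
    show ((FreeGroup.lift (σ i)) (FreeGroup.of s) ⟨x, hx⟩ : X) = FreeGroup.of s • x
    rw [show ((FreeGroup.lift (σ i)) (FreeGroup.of s)) = σ i s from FreeGroup.lift_apply_of]
    exact hσ i s ⟨x, hx⟩ hgx
  | inv_of s ih =>
    intro x
    set y : X := (FreeGroup.of s)⁻¹ • x with hy
    obtain ⟨N, hN⟩ := ih y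
    refine ⟨N, fun i hi => ?_⟩
    obtain ⟨hyi, hgyi, heq⟩ := hN i hi
    have heq' : ((FreeGroup.lift (σ i)) (FreeGroup.of s) ⟨y, hyi⟩ : X) = FreeGroup.of s • y := heq
    have hgyi' : FreeGroup.of s • y ∈ Xi i := hgyi
    have hgy : FreeGroup.of s • y = x := by rw [hy, smul_inv_smul]
    have hx : x ∈ Xi i := by rwa [hgy] at hgyi'
    have hyi' : (FreeGroup.of s)⁻¹ • x ∈ Xi i := by rwa [← hy]
    refine ⟨hx, hyi', ?_⟩
    have himg : (FreeGroup.lift (σ i)) (FreeGroup.of s) ⟨y, hyi⟩ = ⟨x, hx⟩ := by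
      apply Subtype.ext
      rw [heq', hgy]
    show (((FreeGroup.lift (σ i)) (FreeGroup.of s)⁻¹) ⟨x, hx⟩ : X) = (FreeGroup.of s)⁻¹ • x
    rw [map_inv]
    have : ((FreeGroup.lift (σ i)) (FreeGroup.of s))⁻¹ (⟨x, hx⟩ : Xi i) = ⟨y, hyi⟩ := by
      rw [← himg]; simp
    rw [this]
  | mul g h ihg ihh =>
    intro x
    obtain ⟨N1, hN1⟩ := ihh x
    obtain ⟨N2, hN2⟩ := ihg (h • x)
    refine ⟨max N1 N2, fun i hi => ?_⟩
    obtain ⟨hx, hhx, heq1⟩ := hN1 i (le_trans (le_max_left _ _) hi)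
    obtain ⟨hhx', hghx, heq2⟩ := hN2 i (le_trans (le_max_right _ _) hi)
    have hgh : (g * h) • x = g • (h • x) := mul_smul g h x
    refine ⟨hx, by rwa [hgh], ?_⟩
    rw [map_mul]
    have h1 : (FreeGroup.lift (σ i)) h ⟨x, hx⟩ = ⟨h • x, hhx'⟩ := Subtype.ext heq1
    rw [hgh]
    simp only [Equiv.Perm.mul_apply, h1]
    exact heq2
end

section
/- Let I be a type with a distinguished element e, let n ≥ 1, and let f : Fin n → I be a function whose support S = { k : f(k) ≠ e } has cardinality m ≥ 1. Then for every function f' : Fin n → I, the number of permutations σ of Fin n satisfying f ∘ σ = f' is at most m·(n−1)!. -/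
/-- Orbit-counting estimate from the proof of Lemma 2.2: if `f : Fin n → I` has
support of size `m ≥ 1` (relative to a basepoint `e`), then for any `f'` the number
of permutations `σ` with `f ∘ σ = f'` is at most `m * (n-1)!`. -/
theorem stmt_5 (I : Type*) (e : I) (n m : ℕ) (hn : 1 ≤ n) (hm : 1 ≤ m)
    (f : Fin n → I) (hsupp : {k : Fin n | f k ≠ e}.ncard = m) :
    ∀ f' : Fin n → I,
      Nat.card {σ : Equiv.Perm (Fin n) // f ∘ σ = f'} ≤ m * Nat.factorial (n - 1) := by
  classical
  intro f'
  rw [Nat.card_eq_fintype_card, Fintype.card_subtype]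
  set s : Finset (Equiv.Perm (Fin n)) :=
    Finset.univ.filter (fun σ : Equiv.Perm (Fin n) => f ∘ σ = f') with hs
  rcases s.eq_empty_or_nonempty with h | ⟨σ₀, hσ₀⟩
  · rw [h]; simp
  · have hσ₀' : f ∘ σ₀ = f' := by simpa [hs] using hσ₀
    -- support finsets
    have hA : (Finset.univ.filter (fun k : Fin n => f k ≠ e)).card = m := by
      rw [← hsupp, Set.ncard_eq_toFinset_card']
      congr 1
      ext k
      simp
    set A' : Finset (Fin n) := Finset.univ.filter (fun k : Fin n => f' k ≠ e) with hA'def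
    have hA' : A'.card = m := by
      rw [← hA]
      apply Finset.card_nbij' (i := fun k => σ₀ k) (j := fun k => σ₀.symm k)
      · intro k hk
        simp only [hA'def, Finset.mem_coe, Finset.mem_filter, Finset.mem_univ, true_and] at hk ⊢
        rw [show f (σ₀ k) = f' k from congrFun hσ₀' k]; exact hk
      · intro k hk
        simp only [hA'def, Finset.mem_coe, Finset.mem_filter, Finset.mem_univ, true_and] at hk ⊢
        have := congrFun hσ₀' (σ₀.symm k)
        simp only [Function.comp_apply, Equiv.apply_symm_apply] at this
        exact this ▸ hk
      · intro k _; simp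
      · intro k _; simp
    -- pick a in support of f
    obtain ⟨a, ha⟩ : ∃ a, f a ≠ e := by
      have : 0 < (Finset.univ.filter (fun k : Fin n => f k ≠ e)).card := by omega
      obtain ⟨a, ha⟩ := Finset.card_pos.mp this
      exact ⟨a, (Finset.mem_filter.mp ha).2⟩
    -- fiberwise count over σ.symm a
    have hmap : ∀ σ ∈ s, σ.symm a ∈ A' := by
      intro σ hσ
      have hfσ : f ∘ σ = f' := by simpa [hs] using hσ
      simp only [hA'def, Finset.mem_filter, Finset.mem_univ, true_and]
      have := congrFun hfσ (σ.symm a)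
      simp only [Function.comp_apply, Equiv.apply_symm_apply] at this
      rw [← this]; exact ha
    rw [Finset.card_eq_sum_card_fiberwise hmap]
    have key : ∀ b : Fin n,
        (s.filter (fun σ => σ.symm a = b)).card ≤ Nat.factorial (n - 1) := by
      intro b
      have sub : s.filter (fun σ => σ.symm a = b) ⊆
          Finset.univ.filter (fun σ : Equiv.Perm (Fin n) => σ b = a) := by
        intro σ hσ
        simp only [Finset.mem_filter, Finset.mem_univ, true_and] at hσ ⊢
        rw [← hσ.2]; simp
      refine (Finset.card_le_card sub).trans ?_
      rw [← Fintype.card_subtype]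
      have hcard : Fintype.card {x : Fin n // x ≠ b} = n - 1 := by
        simp [Fintype.card_subtype_compl]
      have e' : {x : Fin n // x ≠ b} ≃ {y : Fin n // y ≠ a} :=
        Fintype.equivOfCardEq (by
          simp [Fintype.card_subtype_compl])
      have : Fintype.card {σ : Equiv.Perm (Fin n) // σ b = a} ≤
          Fintype.card ({x : Fin n // x ≠ b} ≃ {y : Fin n // y ≠ a}) := by
        apply Fintype.card_le_of_injective
          (fun σ => σ.1.subtypeEquiv (fun x => by
            constructor
            · intro hx h
              exact hx (σ.1.injective (h.trans σ.2.symm))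
            · intro hx h
              exact hx (h ▸ σ.2)))
        intro σ₁ σ₂ hEq
        ext x
        by_cases hx : x = b
        · rw [hx, σ₁.2, σ₂.2]
        · have := congrArg (fun g => (g ⟨x, hx⟩ : {y : Fin n // y ≠ a}).1) hEq
          simp only [Equiv.subtypeEquiv] at this; exact congrArg Fin.val (by simpa using this)
      refine this.trans ?_
      rw [Fintype.card_equiv e', hcard]
    calc ∑ b ∈ A', (s.filter (fun σ => σ.symm a = b)).card
        ≤ ∑ _b ∈ A', Nat.factorial (n - 1) := Finset.sum_le_sum (fun b _ => key b)
      _ = m * Nat.factorial (n - 1) := by rw [Finset.sum_const, hA', smul_eq_mul]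
end

section
/- Let I be a finite type with a distinguished element e, let n ≥ 1, and let f : Fin n → I be a function whose support S = { k : f(k) ≠ e } has cardinality m ≥ 1. Then ∑_{f' : Fin n → I} ( |{ σ ∈ Sym(Fin n) : f ∘ σ = f' }| / n! )² ≤ m/n. -/
/-!
Normalised, the fibre counts `p f' = #{σ | f ∘ σ = f'} / n!` form a probability vector, so
`∑ p f' ^ 2 ≤ max p`. Fix any `f'` with nonempty fibre and a point `k` with `f' k ≠ e`; every `σ`
in the fibre sends `k` into the support of `f`, and `σ k` is uniformly distributed when `σ` is,
so `p f' ≤ m / n`.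
-/

open Equiv Nat

theorem Finset.sum_sq_le_mul_sum_of_le {ι R : Type*} [CommSemiring R] [PartialOrder R]
    [IsOrderedRing R] {s : Finset ι} {p : ι → R} {c : R} (h0 : ∀ i ∈ s, 0 ≤ p i)
    (hc : ∀ i ∈ s, p i ≤ c) : ∑ i ∈ s, p i ^ 2 ≤ c * ∑ i ∈ s, p i := by
  rw [Finset.mul_sum]
  exact Finset.sum_le_sum fun i hi => by
    rw [sq]
    exact mul_le_mul_of_nonneg_right (hc i hi) (h0 i hi)

theorem Nat.sum_card_fiber {X Y : Type*} [Finite X] [Fintype Y] (g : X → Y) :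
    ∑ y, Nat.card {x // g x = y} = Nat.card X := by
  rw [← Nat.card_sigma, Nat.card_congr (Equiv.sigmaFiberEquiv g)]

namespace Equiv.Perm

variable {α : Type*} [Finite α] [DecidableEq α]

def applyFiberEquiv (a b b' : α) : {σ : Perm α // σ a = b} ≃ {σ : Perm α // σ a = b'} :=
  (Equiv.mulLeft (swap b b')).subtypeEquiv fun σ => by
    simp [swap_apply_eq_iff, swap_apply_right]

theorem card_apply_eq_mul_card (a b : α) :
    Nat.card {σ : Perm α // σ a = b} * Nat.card α = (Nat.card α)! := by
  have := Fintype.ofFinite α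
  have hfiber : ∀ b', Nat.card {σ : Perm α // σ a = b'} = Nat.card {σ : Perm α // σ a = b} :=
    fun b' => Nat.card_congr (applyFiberEquiv a b' b)
  rw [← Nat.card_perm, ← Nat.sum_card_fiber (fun σ : Perm α => σ a)]
  simp only [hfiber, Finset.sum_const, Finset.card_univ, smul_eq_mul, Nat.card_eq_fintype_card,
    mul_comm]

theorem card_apply_mem_mul_card (a : α) (S : Set α) :
    Nat.card {σ : Perm α // σ a ∈ S} * Nat.card α = S.ncard * (Nat.card α)! := by
  classical
  have := Fintype.ofFinite α
  have hpre : Nat.card {σ : Perm α // σ a ∈ S} =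
      ∑ b ∈ S.toFinset, Nat.card {σ : Perm α // σ a = b} := by
    rw [← Finset.card_preimage_eq_sum_card_image_eq fun b _ => Set.toFinite _]
    simp only [Set.coe_toFinset]
    rfl
  rw [hpre, Finset.sum_mul]
  simp only [card_apply_eq_mul_card, Finset.sum_const, smul_eq_mul, Set.ncard_eq_toFinset_card']

theorem card_comp_eq_mul_card_le {I : Type*} (f f' : α → I) {k : α} {T : Set I} (hk : f' k ∈ T) :
    Nat.card {σ : Perm α // f ∘ σ = f'} * Nat.card α ≤ (f ⁻¹' T).ncard * (Nat.card α)! := by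
  rw [← card_apply_mem_mul_card k]
  have hmaps : ∀ σ : Perm α, f ∘ σ = f' → σ k ∈ f ⁻¹' T := fun σ hσ => by
    simpa [← hσ] using hk
  exact Nat.mul_le_mul_right _
    (Nat.card_le_card_of_injective _ (Subtype.impEmbedding _ _ hmaps).injective)

theorem card_comp_eq_mul_card_le_ncard_support {I : Type*} (f f' : α → I) (e : I)
    {j : α} (hj : f j ≠ e) :
    Nat.card {σ : Perm α // f ∘ σ = f'} * Nat.card α ≤ {k | f k ≠ e}.ncard * (Nat.card α)! := by
  rcases isEmpty_or_nonempty {σ : Perm α // f ∘ σ = f'} with _ | ⟨σ₀, rfl⟩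
  · simp
  · exact card_comp_eq_mul_card_le f (f ∘ σ₀) (k := σ₀.symm j) (T := {e}ᶜ) (by simpa using hj)

end Equiv.Perm

theorem stmt_6_general (I : Type*) [Fintype I] (e : I) (n m : ℕ) (hm : 1 ≤ m)
    (f : Fin n → I) (hsupp : {k : Fin n | f k ≠ e}.ncard = m) :
    ∑ f' : Fin n → I,
      ((Nat.card {σ : Equiv.Perm (Fin n) // f ∘ σ = f'} : ℝ) /
        (Nat.factorial n : ℝ)) ^ 2 ≤ (m : ℝ) / (n : ℝ) := by
  obtain ⟨j, hj⟩ : {k : Fin n | f k ≠ e}.Nonempty :=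
    Set.nonempty_of_ncard_ne_zero (by rw [hsupp]; omega)
  have hn : (0 : ℝ) < n := by exact_mod_cast j.pos
  have hfac : (0 : ℝ) < n ! := by positivity
  have hbound : ∀ f' : Fin n → I,
      (Nat.card {σ : Perm (Fin n) // f ∘ σ = f'} : ℝ) / n ! ≤ m / n := fun f' => by
    rw [div_le_div_iff₀ hfac hn]
    have := Perm.card_comp_eq_mul_card_le_ncard_support f f' e hj
    rw [hsupp, Nat.card_fin] at this
    exact_mod_cast this
  have htotal : ∑ f' : Fin n → I, (Nat.card {σ : Perm (Fin n) // f ∘ σ = f'} : ℝ) / n ! = 1 := by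
    rw [← Finset.sum_div, div_eq_one_iff_eq hfac.ne']
    exact_mod_cast (Nat.sum_card_fiber fun σ : Perm (Fin n) => f ∘ σ).trans
      (by rw [Nat.card_perm, Nat.card_fin])
  calc _ ≤ (m / n : ℝ) * ∑ f' : Fin n → I, (Nat.card {σ : Perm (Fin n) // f ∘ σ = f'} : ℝ) / n ! :=
        Finset.sum_sq_le_mul_sum_of_le (fun _ _ => by positivity) fun f' _ => hbound f'
    _ = m / n := by rw [htotal, mul_one]

/-- The ℓ²-estimate from the proof of Lemma 2.2: for `f : Fin n → I` with support of
size `m ≥ 1`, the vector of normalized orbit counts has squared ℓ²-norm at most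
`m / n`. -/
theorem stmt_6 (I : Type*) [Fintype I] (e : I) (n m : ℕ) (hn : 1 ≤ n) (hm : 1 ≤ m)
    (f : Fin n → I) (hsupp : {k : Fin n | f k ≠ e}.ncard = m) :
    ∑ f' : Fin n → I,
      ((Nat.card {σ : Equiv.Perm (Fin n) // f ∘ σ = f'} : ℝ) /
        (Nat.factorial n : ℝ)) ^ 2 ≤ (m : ℝ) / (n : ℝ) :=
  stmt_6_general I e n m hm f hsupp
end
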